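/- arXiv:2306.03048 — 3 statements merged into one kernel-verified Lean document; each statement's English description precedes it below -/
import Mathlib

section
/- Minimal hitting set duality (direction 1): a set X ⊆ F is a distance-restricted AXp (a subset-minimal weak AXp) if and only if X is a minimal hitting set of the collection of all distance-restricted CXp's. -/
/-- Distance-restricted weak abductive explanation. -/
def WAXp {m : ℕ} {D : Fin m → Type*} {K : Type*}
    (κ : (∀ i, D i) → K) (v : ∀ i, D i) (c : K)
    (dist : (∀ i, D i) → (∀ i, D i) → ℝ) (ε : ℝ) (X : Set (Fin m)) : Prop :=
  ∀ x : ∀ i, D i, (∀ i ∈ X, x i = v i) → dist x v ≤ ε → κ x = c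

/-- Distance-restricted weak contrastive explanation. -/
def WCXp {m : ℕ} {D : Fin m → Type*} {K : Type*}
    (κ : (∀ i, D i) → K) (v : ∀ i, D i) (c : K)
    (dist : (∀ i, D i) → (∀ i, D i) → ℝ) (ε : ℝ) (Y : Set (Fin m)) : Prop :=
  ∃ x : ∀ i, D i, (∀ i ∉ Y, x i = v i) ∧ dist x v ≤ ε ∧ κ x ≠ c

/-- Distance-restricted AXp: a subset-minimal weak AXp. -/
def AXp {m : ℕ} {D : Fin m → Type*} {K : Type*}
    (κ : (∀ i, D i) → K) (v : ∀ i, D i) (c : K)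
    (dist : (∀ i, D i) → (∀ i, D i) → ℝ) (ε : ℝ) (X : Set (Fin m)) : Prop :=
  WAXp κ v c dist ε X ∧ ∀ X' : Set (Fin m), X' ⊂ X → ¬ WAXp κ v c dist ε X'

/-- Distance-restricted CXp: a subset-minimal weak CXp. -/
def CXp {m : ℕ} {D : Fin m → Type*} {K : Type*}
    (κ : (∀ i, D i) → K) (v : ∀ i, D i) (c : K)
    (dist : (∀ i, D i) → (∀ i, D i) → ℝ) (ε : ℝ) (Y : Set (Fin m)) : Prop :=
  WCXp κ v c dist ε Y ∧ ∀ Y' : Set (Fin m), Y' ⊂ Y → ¬ WCXp κ v c dist ε Y'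

/-- `H` is a hitting set of the collection `B`. -/
def HittingSet {α : Type*} (B : Set (Set α)) (H : Set α) : Prop :=
  ∀ P ∈ B, (H ∩ P).Nonempty

/-!
A set hits every CXp exactly when it is a weak AXp: if `X` is not a weak AXp, then a
counterexample that fixes `X` shows that `Xᶜ` is a weak CXp, and a CXp inside `Xᶜ` (one exists,
the feature set being finite) misses `X`; conversely a weak AXp and a weak CXp must share a
feature, since otherwise the witness of the latter fixes the former. Taking subset-minimal
elements on both sides gives the duality.
-/

section Duality

variable {m : ℕ} {D : Fin m → Type*} {K : Type*} {κ : (∀ i, D i) → K} {v : ∀ i, D i} {c : K}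
  {dist : (∀ i, D i) → (∀ i, D i) → ℝ} {ε : ℝ}

theorem WAXp.inter_nonempty_of_wcxp {X Y : Set (Fin m)} (hX : WAXp κ v c dist ε X)
    (hY : WCXp κ v c dist ε Y) : (X ∩ Y).Nonempty := by
  by_contra hXY
  obtain ⟨x, hxY, hdist, hne⟩ := hY
  exact hne <| hX x (fun i hiX => hxY i fun hiY => hXY ⟨i, hiX, hiY⟩) hdist

theorem not_waxp_iff_wcxp_compl {X : Set (Fin m)} :
    ¬ WAXp κ v c dist ε X ↔ WCXp κ v c dist ε Xᶜ := by
  simp only [WAXp, WCXp, Set.mem_compl_iff, not_not, not_forall, exists_prop]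

theorem WCXp.exists_cxp_subset {Y : Set (Fin m)} (hY : WCXp κ v c dist ε Y) :
    ∃ Y' ⊆ Y, CXp κ v c dist ε Y' := by
  obtain ⟨Y', hY'Y, hmin⟩ := exists_minimal_le_of_wellFoundedLT (WCXp κ v c dist ε) Y hY
  exact ⟨Y', hY'Y, hmin.1, fun Z hZ hWZ => hZ.not_ge (hmin.le_of_le hWZ hZ.subset)⟩

theorem hittingSet_cxp_iff_waxp {X : Set (Fin m)} :
    HittingSet {Y | CXp κ v c dist ε Y} X ↔ WAXp κ v c dist ε X := by
  refine ⟨fun hX => ?_, fun hX Y hY => hX.inter_nonempty_of_wcxp hY.1⟩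
  by_contra hnX
  obtain ⟨Y, hYX, hY⟩ := (not_waxp_iff_wcxp_compl.mp hnX).exists_cxp_subset
  obtain ⟨i, hiX, hiY⟩ := hX Y hY
  exact hYX hiY hiX

end Duality

theorem axp_iff_mhs_of_cxps_general {m : ℕ} {D : Fin m → Type*} {K : Type*}
    (κ : (∀ i, D i) → K) (v : ∀ i, D i) (c : K)
    (dist : (∀ i, D i) → (∀ i, D i) → ℝ) (ε : ℝ)
    (X : Set (Fin m)) :
    AXp κ v c dist ε X ↔
      (HittingSet {Y : Set (Fin m) | CXp κ v c dist ε Y} X ∧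
        ∀ H : Set (Fin m), H ⊂ X →
          ¬ HittingSet {Y : Set (Fin m) | CXp κ v c dist ε Y} H) := by
  simp only [AXp, hittingSet_cxp_iff_waxp]

/-- Minimal hitting set duality (direction 1): `X` is a distance-restricted AXp iff
`X` is a minimal hitting set of the collection of all distance-restricted CXp's. -/
theorem axp_iff_mhs_of_cxps {m : ℕ} {D : Fin m → Type*} {K : Type*}
    (κ : (∀ i, D i) → K) (v : ∀ i, D i) (c : K) (hvc : κ v = c)
    (dist : (∀ i, D i) → (∀ i, D i) → ℝ) (ε : ℝ) (hε : 0 < ε)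
    (X : Set (Fin m)) :
    AXp κ v c dist ε X ↔
      (HittingSet {Y : Set (Fin m) | CXp κ v c dist ε Y} X ∧
        ∀ H : Set (Fin m), H ⊂ X →
          ¬ HittingSet {Y : Set (Fin m) | CXp κ v c dist ε Y} H) :=
  axp_iff_mhs_of_cxps_general κ v c dist ε X
end

section
/- Minimal hitting set duality (direction 2): a set Y ⊆ F is a distance-restricted CXp (a subset-minimal weak CXp) if and only if Y is a minimal hitting set of the collection of all distance-restricted AXp's. -/
private lemma exists_minimal_subset {α : Type*} [Finite α] (P : Set α → Prop) :
    ∀ X : Set α, P X → ∃ X' ⊆ X, P X' ∧ ∀ Z, Z ⊂ X' → ¬ P Z := by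
  intro X
  induction X using ((Finite.to_wellFoundedLT (α := Set α)).wf).induction with
  | _ X ih =>
    intro hX
    by_cases h : ∀ Z, Z ⊂ X → ¬ P Z
    · exact ⟨X, subset_rfl, hX, h⟩
    · push_neg at h
      obtain ⟨Z, hZX, hZ⟩ := h
      obtain ⟨X', hX'Z, hP, hmin⟩ := ih Z hZX hZ
      exact ⟨X', hX'Z.trans hZX.subset, hP, hmin⟩

private lemma waxp_mono {m : ℕ} {D : Fin m → Type*} {K : Type*}
    (κ : (∀ i, D i) → K) (v : ∀ i, D i) (c : K)
    (dist : (∀ i, D i) → (∀ i, D i) → ℝ) (ε : ℝ) {X X' : Set (Fin m)}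
    (h : X ⊆ X') (hX : WAXp κ v c dist ε X) : WAXp κ v c dist ε X' :=
  fun x hx hd => hX x (fun i hi => hx i (h hi)) hd

private lemma wcxp_iff_hs {m : ℕ} {D : Fin m → Type*} {K : Type*}
    (κ : (∀ i, D i) → K) (v : ∀ i, D i) (c : K)
    (dist : (∀ i, D i) → (∀ i, D i) → ℝ) (ε : ℝ) (Y : Set (Fin m)) :
    WCXp κ v c dist ε Y ↔ HittingSet {X : Set (Fin m) | AXp κ v c dist ε X} Y := by
  constructor
  · rintro ⟨x, hx, hd, hne⟩ X hX
    by_contra hempty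
    have hsub : X ⊆ Yᶜ := by
      intro i hiX
      intro hiY
      exact hempty ⟨i, hiY, hiX⟩
    have : WAXp κ v c dist ε Yᶜ := waxp_mono κ v c dist ε hsub hX.1
    exact hne (this x (fun i hi => hx i hi) hd)
  · intro hhs
    by_contra hnc
    have hW : WAXp κ v c dist ε Yᶜ := by
      intro x hx hd
      by_contra hne
      exact hnc ⟨x, fun i hi => hx i hi, hd, hne⟩
    obtain ⟨X', hsub, hP, hmin⟩ := exists_minimal_subset (WAXp κ v c dist ε) Yᶜ hW
    obtain ⟨i, hiY, hiX⟩ := hhs X' ⟨hP, hmin⟩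
    exact hsub hiX hiY

/-- Minimal hitting set duality (direction 2): `Y` is a distance-restricted CXp iff
`Y` is a minimal hitting set of the collection of all distance-restricted AXp's. -/
theorem cxp_iff_mhs_of_axps {m : ℕ} {D : Fin m → Type*} {K : Type*}
    (κ : (∀ i, D i) → K) (v : ∀ i, D i) (c : K) (hvc : κ v = c)
    (dist : (∀ i, D i) → (∀ i, D i) → ℝ) (ε : ℝ) (hε : 0 < ε)
    (Y : Set (Fin m)) :
    CXp κ v c dist ε Y ↔
      (HittingSet {X : Set (Fin m) | AXp κ v c dist ε X} Y ∧
        ∀ H : Set (Fin m), H ⊂ Y →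
          ¬ HittingSet {X : Set (Fin m) | AXp κ v c dist ε X} H) := by
  unfold CXp
  rw [wcxp_iff_hs κ v c dist ε]
  constructor
  · rintro ⟨h1, h2⟩
    exact ⟨h1, fun H hH hhs => h2 H hH ((wcxp_iff_hs κ v c dist ε H).mpr hhs)⟩
  · rintro ⟨h1, h2⟩
    exact ⟨h1, fun H hH hw => h2 H hH ((wcxp_iff_hs κ v c dist ε H).mp hw)⟩
end

section
/- Non-monotonicity of (subset-minimal) CXps in the distance parameter: there exists a classifier κ : [0,1]² → {0,1} with κ(1,1)=1, an instance ((1,1),1), the l_∞ norm, and distances ε₁ = 0.5 < ε₂ = 1, such that the set of features {1,2} is a distance-ε₁ CXp but is not a distance-ε₂ CXp (because the singletons {1} and {2} are distance-ε₂ weak CXps). -/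
/-
The classifier is `1` everywhere except at `(1/2, 1/2)`, `(0, 1)` and `(1, 0)`. Within
`l_∞`-distance `1/2` of `(1, 1)` the only one of these is `(1/2, 1/2)`, which moves both
features, so `{1, 2}` is a minimal weak CXp there. At distance `1` the corners `(0, 1)` and
`(1, 0)` become reachable, each moving a single feature, so `{1, 2}` is no longer minimal.
-/

/-- Distance-`δ` weak CXp for a classifier on `[0,1]²` at the instance `((1,1), 1)`,
using the `l_∞` norm (the sup norm on `Fin 2 → ℝ`). -/
def WCXp2 (κ : (Fin 2 → ℝ) → ℕ) (δ : ℝ) (Y : Set (Fin 2)) : Prop :=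
  ∃ x : Fin 2 → ℝ, (∀ i, x i ∈ Set.Icc (0 : ℝ) 1) ∧ (∀ i ∉ Y, x i = 1) ∧
    ‖x - fun _ => (1 : ℝ)‖ ≤ δ ∧ κ x ≠ 1

/-- Distance-`δ` CXp: a subset-minimal distance-`δ` weak CXp. -/
def CXp2 (κ : (Fin 2 → ℝ) → ℕ) (δ : ℝ) (Y : Set (Fin 2)) : Prop :=
  WCXp2 κ δ Y ∧ ∀ Y' : Set (Fin 2), Y' ⊂ Y → ¬ WCXp2 κ δ Y'

open Set

theorem norm_sub_one_le_one_of_mem_Icc {ι : Type*} [Fintype ι] {x : ι → ℝ}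
    (hx : ∀ i, x i ∈ Icc (0 : ℝ) 1) : ‖x - fun _ => (1 : ℝ)‖ ≤ 1 := by
  refine (pi_norm_le_iff_of_nonneg zero_le_one).2 fun i => ?_
  rw [Pi.sub_apply, Real.norm_eq_abs, abs_le]
  constructor <;> linarith [(hx i).1, (hx i).2]

theorem WCXp2.mono {κ : (Fin 2 → ℝ) → ℕ} {δ : ℝ} {Y Y' : Set (Fin 2)} (h : WCXp2 κ δ Y)
    (hY : Y ⊆ Y') : WCXp2 κ δ Y' :=
  let ⟨x, hbox, hfix, hnorm, hκ⟩ := h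
  ⟨x, hbox, fun i hi => hfix i (fun h => hi (hY h)), hnorm, hκ⟩

theorem cxp2_univ_iff {κ : (Fin 2 → ℝ) → ℕ} {δ : ℝ} :
    CXp2 κ δ univ ↔ WCXp2 κ δ univ ∧ ∀ i, ¬ WCXp2 κ δ {i}ᶜ := by
  refine and_congr_right fun _ => ⟨fun h i => h _ (ssubset_univ_iff.2 (by simp)), ?_⟩
  intro h Y' hY' hw
  obtain ⟨i, hi⟩ := (ne_univ_iff_exists_notMem Y').1 hY'.ne
  exact h i (hw.mono (subset_compl_singleton_iff.2 hi))

noncomputable def classifierVanishingOn (S : Set (Fin 2 → ℝ)) : (Fin 2 → ℝ) → ℕ :=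
  Sᶜ.indicator 1

theorem classifierVanishingOn_ne_one_iff {S : Set (Fin 2 → ℝ)} {x : Fin 2 → ℝ} :
    classifierVanishingOn S x ≠ 1 ↔ x ∈ S := by
  by_cases hx : x ∈ S <;> simp [classifierVanishingOn, hx]

theorem wcxp2_classifierVanishingOn_iff {S : Set (Fin 2 → ℝ)} {δ : ℝ} {Y : Set (Fin 2)} :
    WCXp2 (classifierVanishingOn S) δ Y ↔
      ∃ x ∈ S, (∀ i, x i ∈ Icc (0 : ℝ) 1) ∧ (∀ i ∉ Y, x i = 1) ∧ ‖x - fun _ => (1 : ℝ)‖ ≤ δ := by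
  simp only [WCXp2, classifierVanishingOn_ne_one_iff]
  grind

theorem wcxp2_classifierVanishingOn_one {S : Set (Fin 2 → ℝ)} {Y : Set (Fin 2)} {x : Fin 2 → ℝ}
    (hx : x ∈ S) (hbox : ∀ i, x i ∈ Icc (0 : ℝ) 1) (hfix : ∀ i ∉ Y, x i = 1) :
    WCXp2 (classifierVanishingOn S) 1 Y :=
  wcxp2_classifierVanishingOn_iff.2 ⟨x, hx, hbox, hfix, norm_sub_one_le_one_of_mem_Icc hbox⟩

def counterexamples : Set (Fin 2 → ℝ) := {fun _ => 1/2, ![0, 1], ![1, 0]}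

theorem eq_half_of_mem_counterexamples {x : Fin 2 → ℝ} (hx : x ∈ counterexamples)
    (hnorm : ‖x - fun _ => (1 : ℝ)‖ ≤ 1/2) : x = fun _ => 1/2 := by
  rw [pi_norm_le_iff_of_nonneg (by norm_num)] at hnorm
  rcases hx with rfl | rfl | rfl
  · rfl
  · have := hnorm 0; norm_num at this
  · have := hnorm 1; norm_num at this

theorem cxp2_classifierVanishingOn_counterexamples_half :
    CXp2 (classifierVanishingOn counterexamples) (1/2) univ := by
  refine cxp2_univ_iff.2 ⟨wcxp2_classifierVanishingOn_iff.2
    ⟨fun _ => 1/2, by simp [counterexamples], by norm_num, by simp, ?_⟩, fun i h => ?_⟩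
  · rw [pi_norm_le_iff_of_nonneg (by norm_num)]
    norm_num
  · obtain ⟨x, hx, -, hfix, hnorm⟩ := wcxp2_classifierVanishingOn_iff.1 h
    have hxi := hfix i (by simp)
    rw [eq_half_of_mem_counterexamples hx hnorm] at hxi
    norm_num at hxi

/-- Non-monotonicity of subset-minimal CXps in the distance parameter: there is a
classifier `κ` on `[0,1]²` with `κ (1,1) = 1`, `κ (0.5,0.5) = 0`, `κ (0,1) = 0`,
`κ (1,0) = 0`, such that for the instance `((1,1),1)` and the `l_∞` norm, the full
feature set `{1,2}` is a distance-`0.5` CXp but not a distance-`1` CXp, because the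
singletons `{1}` and `{2}` are distance-`1` weak CXps. -/
theorem cxp_not_monotone_in_distance :
    ∃ κ : (Fin 2 → ℝ) → ℕ,
      κ (fun _ => 1) = 1 ∧ κ (fun _ => 1/2) = 0 ∧ κ ![0, 1] = 0 ∧ κ ![1, 0] = 0 ∧
      CXp2 κ (1/2) Set.univ ∧
      ¬ CXp2 κ 1 Set.univ ∧
      WCXp2 κ 1 {0} ∧ WCXp2 κ 1 {1} := by
  have hw0 : WCXp2 (classifierVanishingOn counterexamples) 1 {0} :=
    wcxp2_classifierVanishingOn_one (x := ![0, 1]) (by simp [counterexamples])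
      (by simp [Fin.forall_fin_two]) (by simp [Fin.forall_fin_two])
  have hw1 : WCXp2 (classifierVanishingOn counterexamples) 1 {1} :=
    wcxp2_classifierVanishingOn_one (x := ![1, 0]) (by simp [counterexamples])
      (by simp [Fin.forall_fin_two]) (by simp [Fin.forall_fin_two])
  refine ⟨classifierVanishingOn counterexamples, ?_, ?_, ?_, ?_,
    cxp2_classifierVanishingOn_counterexamples_half,
    fun h => h.2 {0} (ssubset_univ_iff.2 (by simp)) hw0, hw0, hw1⟩ <;>
    simp [classifierVanishingOn, counterexamples, funext_iff, Fin.forall_fin_two]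
end
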